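/- arXiv:1901.02927 — 3 statements merged into one kernel-verified Lean document; each statement's English description precedes it below -/
import Mathlib

section
/- Let H be a submonoid of ℕ^k with H ≠ {0}, and let X be a nonempty subset of {1,…,k}. Then X is maximal independent over H if and only if X is maximal independent over β(H). -/
def coordFn {k : ℕ} (A : Set (Fin k → ℕ)) (i : Fin k) : A → ℚ :=
  fun f => ((f : Fin k → ℕ) i : ℚ)

def IndepOver {k : ℕ} (X : Finset (Fin k)) (A : Set (Fin k → ℕ)) : Prop :=
  LinearIndependent ℚ (fun i : X => coordFn A i.1)

def MaxIndepOver {k : ℕ} (X : Finset (Fin k)) (A : Set (Fin k → ℕ)) : Prop :=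
  IndepOver X A ∧ ∀ Y : Finset (Fin k), X ⊂ Y → ¬ IndepOver Y A

open Pointwise in
def beta {k : ℕ} (H : AddSubmonoid (Fin k → ℕ)) : Set (Fin k → ℕ) :=
  ((H : Set (Fin k → ℕ)) \ {0}) \
    (((H : Set (Fin k → ℕ)) \ {0}) + ((H : Set (Fin k → ℕ)) \ {0}))

def restrictHom {k : ℕ} (X : Finset (Fin k)) : (Fin k → ℕ) →+ (Fin X.card → ℕ) where
  toFun h := fun j => h (X.orderIsoOfFin rfl j).1
  map_zero' := rfl
  map_add' _ _ := rfl

def IsoToSub {k : ℕ} (H : AddSubmonoid (Fin k → ℕ)) (r : ℕ) : Prop :=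
  ∃ K : AddSubmonoid (Fin r → ℕ), Nonempty (H ≃+ K)

noncomputable def indOf {k : ℕ} (H : AddSubmonoid (Fin k → ℕ)) : ℕ :=
  sInf {r : ℕ | 1 ≤ r ∧ IsoToSub H r}


open Pointwise in
lemma beta_vanish {k : ℕ} (H : AddSubmonoid (Fin k → ℕ)) (L : (Fin k → ℕ) → ℚ)
    (hL0 : L 0 = 0) (hLadd : ∀ a b, L (a + b) = L a + L b)
    (hβ : ∀ a ∈ beta H, L a = 0) : ∀ h ∈ H, L h = 0 := by
  have main : ∀ n : ℕ, ∀ h, h ∈ H → (∑ i, h i) = n → L h = 0 := by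
    intro n
    induction n using Nat.strong_induction_on with
    | _ n ih =>
    intro h hh hn
    subst hn
    by_cases h0 : h = 0
    · subst h0; exact hL0
    by_cases hb : h ∈ beta H
    · exact hβ h hb
    · have hmem : h ∈ ((H : Set (Fin k → ℕ)) \ {0}) := ⟨hh, h0⟩
      have hsum : h ∈ ((H : Set (Fin k → ℕ)) \ {0}) + ((H : Set (Fin k → ℕ)) \ {0}) := by
        by_contra hc
        exact hb ⟨hmem, hc⟩
      obtain ⟨a, ha, b, hbm, hab⟩ := hsum
      have hpos : ∀ c : Fin k → ℕ, c ∈ ((H : Set (Fin k → ℕ)) \ {0}) → 0 < ∑ i, c i := by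
        intro c hc
        rcases Nat.eq_zero_or_pos (∑ i, c i) with h' | h'
        · exfalso
          apply hc.2
          have := (Finset.sum_eq_zero_iff).mp h'
          funext i
          exact this i (Finset.mem_univ i)
        · exact h'
      have hsplit : ∑ i, h i = (∑ i, a i) + (∑ i, b i) := by
        rw [← hab]; simp [Finset.sum_add_distrib]
      have h1 := hpos a ha
      have h2 := hpos b hbm
      have hla : L a = 0 := ih (∑ i, a i) (by omega) a ha.1 rfl
      have hlb : L b = 0 := ih (∑ i, b i) (by omega) b hbm.1 rfl
      rw [← hab, hLadd, hla, hlb, add_zero]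
  exact fun h hh => main (∑ i, h i) h hh rfl

lemma indep_iff_beta {k : ℕ} (H : AddSubmonoid (Fin k → ℕ)) (X : Finset (Fin k)) :
    IndepOver X (H : Set (Fin k → ℕ)) ↔ IndepOver X (beta H) := by
  have hsub : beta H ⊆ (H : Set (Fin k → ℕ)) := fun a ha => ha.1.1
  unfold IndepOver
  rw [Fintype.linearIndependent_iff, Fintype.linearIndependent_iff]
  constructor
  · intro hi g hg
    apply hi g
    funext a
    have key : ∀ h ∈ H, (∑ i : X, g i * ((h i.1 : ℚ))) = 0 := by
      apply beta_vanish H (fun h => ∑ i : X, g i * ((h i.1 : ℚ)))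
      · simp
      · intro a b
        simp [mul_add, Finset.sum_add_distrib]
      · intro a ha
        have := congrFun hg ⟨a, ha⟩
        simpa [coordFn] using this
    have := key (a : Fin k → ℕ) a.2
    simpa [coordFn] using this
  · intro hi g hg
    apply hi g
    funext a
    have := congrFun hg ⟨(a : Fin k → ℕ), hsub a.2⟩
    simpa [coordFn] using this

theorem statement4 {k : ℕ} (hk : 0 < k) (H : AddSubmonoid (Fin k → ℕ)) (hH : H ≠ ⊥)
    (X : Finset (Fin k)) (hX : X.Nonempty) :
    MaxIndepOver X (H : Set (Fin k → ℕ)) ↔ MaxIndepOver X (beta H) := by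
  unfold MaxIndepOver
  constructor
  · rintro ⟨h1, h2⟩
    exact ⟨(indep_iff_beta H X).mp h1, fun Y hY hYi => h2 Y hY ((indep_iff_beta H Y).mpr hYi)⟩
  · rintro ⟨h1, h2⟩
    exact ⟨(indep_iff_beta H X).mpr h1, fun Y hY hYi => h2 Y hY ((indep_iff_beta H Y).mp hYi)⟩
end

section
/- Let H be a submonoid of ℕ^k with H ≠ {0}, and let X ⊆ {1,…,k} be maximal independent over H. Then free H = |X|; that is, there exists a submonoid F of ℕ^k with F ⊆ H such that F is isomorphic as an additive monoid to ℕ^{|X|}, and every submonoid F ⊆ H isomorphic to some ℕ^n (n ≥ 1) satisfies n ≤ |X|. -/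
/-!
Embed `ℕ^k` in `ℚ^k` and let `V` be the `ℚ`-span of `H`. Independence of the coordinates in `X`
over `H` says that restriction to the coordinates in `X` maps `V` onto `ℚ^X`; maximality says that
every other coordinate is, on `H` and hence on `V`, a linear combination of those in `X`, so this
restriction is also injective on `V`. Thus `dim V = |X|`. The standard generators of a free
submonoid `ℕ^n ⊆ H` are `ℕ`-, hence `ℤ`-, hence `ℚ`-independent vectors of `V`, so `n ≤ |X|`;
conversely `|X|` elements of `H` that are independent over `ℚ` generate a free submonoid of
rank `|X|`.
-/

open Module Submodule Function Set

section Transpose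

variable {ι A K : Type*} [Field K] (u : A → ι → K)

theorem span_range_eq_top_of_linearIndependent_swap [Fintype ι] [DecidableEq ι]
    (hu : LinearIndependent K (swap u)) : span K (range u) = ⊤ := by
  by_contra hne
  obtain ⟨f, hf, hmap⟩ := exists_dual_map_eq_bot_of_lt_top (lt_top_iff_ne_top.2 hne) inferInstance
  set c : ι → K := fun i => f fun j => if i = j then 1 else 0
  have hc : ∑ i, c i • swap u i = 0 := by
    funext a
    have hfa : f (u a) ∈ map f (span K (range u)) := mem_map_of_mem (subset_span (mem_range_self a))
    rw [hmap, mem_bot, f.pi_apply_eq_sum_univ] at hfa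
    simpa [swap, mul_comm] using hfa
  have hc0 := Fintype.linearIndependent_iff.1 hu c hc
  refine hf (LinearMap.ext fun x => ?_)
  rw [f.pi_apply_eq_sum_univ x]
  exact Finset.sum_eq_zero fun i _ => by rw [show f _ = 0 from hc0 i, smul_zero]

theorem apply_eq_zero_of_swap_mem_span {Y : Set ι} {i : ι} (hi : swap u i ∈ span K (swap u '' Y))
    {v : ι → K} (hv : v ∈ span K (range u)) (hY : ∀ j ∈ Y, v j = 0) : v i = 0 := by
  obtain ⟨t, htY, c, hc⟩ := (mem_span_image_iff_exists_fun K).1 hi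
  let ℓ : (ι → K) →ₗ[K] K := LinearMap.proj i - ∑ j : t, c j • LinearMap.proj (j : ι)
  have hℓ : span K (range u) ≤ LinearMap.ker ℓ := by
    refine span_le.2 (range_subset_iff.2 fun a => ?_)
    have hca := congrFun hc a
    simp only [Finset.sum_apply, Pi.smul_apply, smul_eq_mul, swap] at hca
    simp [ℓ, -Finset.univ_eq_attach, hca]
  have hℓv : ℓ v = 0 := hℓ hv
  simpa [ℓ, sub_eq_zero, fun j : t => hY j (htY j.2)] using hℓv

theorem finrank_span_range_eq_card {Y : Finset ι} (hY : LinearIndepOn K (swap u) (Y : Set ι))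
    (hmax : ∀ i, swap u i ∈ span K (swap u '' Y)) : finrank K (span K (range u)) = Y.card := by
  classical
  let π : (ι → K) →ₗ[K] (Y → K) := LinearMap.funLeft K K Subtype.val
  have hsurj : map π (span K (range u)) = ⊤ := by
    rw [map_span, ← range_comp]
    exact span_range_eq_top_of_linearIndependent_swap (π ∘ u) hY
  have hinj : Injective (π.domRestrict (span K (range u))) := by
    rw [← LinearMap.ker_eq_bot, LinearMap.ker_eq_bot']
    rintro ⟨v, hv⟩ hπv
    ext i
    exact apply_eq_zero_of_swap_mem_span u (hmax i) hv fun j hj => congrFun hπv ⟨j, hj⟩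
  rw [← LinearMap.finrank_range_of_inj hinj, LinearMap.range_domRestrict, hsurj, finrank_top,
    finrank_fintype_fun_eq_card, Fintype.card_coe]

end Transpose

theorem MaxIndepOver.coordFn_mem_span {k : ℕ} {X : Finset (Fin k)} {A : Set (Fin k → ℕ)}
    (hmax : MaxIndepOver X A) (i : Fin k) : coordFn A i ∈ span ℚ (coordFn A '' X) := by
  classical
  by_contra hi
  have hiX : i ∉ X := fun h => hi (subset_span (mem_image_of_mem _ h))
  refine hmax.2 (insert i X) (Finset.ssubset_insert hiX) ?_
  change LinearIndepOn ℚ (coordFn A) ↑(insert i X)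
  rw [Finset.coe_insert]
  exact LinearIndepOn.insert hmax.1 hi

def toRatVec (ι : Type*) : (ι → ℕ) →+ (ι → ℚ) := (Nat.castAddMonoidHom ℚ).compLeft ι

theorem toRatVec_injective (ι : Type*) : Injective (toRatVec ι) :=
  fun _ _ h => funext fun i => by simpa [toRatVec] using congrFun h i

theorem linearIndependent_toRatVec_iff {ι κ : Type*} [Fintype κ] {v : κ → ι → ℕ} :
    LinearIndependent ℚ (toRatVec ι ∘ v) ↔ LinearIndependent ℕ v := by
  refine ⟨fun hv => (hv.restrict_scalars' ℕ).of_comp (toRatVec ι).toNatLinearMap, fun hv => ?_⟩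
  rw [← LinearIndependent.iff_fractionRing ℤ ℚ, Fintype.linearIndependent_iff]
  intro q hq j
  -- split the `ℤ`-relation into its positive and negative parts
  have hsplit : ∑ i, (q i).toNat • v i = ∑ i, (-q i).toNat • v i := by
    apply toRatVec_injective
    simp only [map_sum, map_nsmul, ← natCast_zsmul]
    rw [← sub_eq_zero, ← Finset.sum_sub_distrib, ← hq]
    refine Finset.sum_congr rfl fun i _ => ?_
    rw [← sub_smul, Int.toNat_sub_toNat_neg]
    rfl
  have hj := Fintype.linearIndependent_iffₛ.1 hv _ _ hsplit j
  rw [← Int.toNat_sub_toNat_neg (q j), hj, sub_self]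

theorem AddSubmonoid.exists_le_addEquiv_pi_of_linearIndependent {M κ : Type*} [AddCommMonoid M]
    [Finite κ] (H : AddSubmonoid M) {v : κ → M} (hv : LinearIndependent ℕ v) (hvH : ∀ j, v j ∈ H) :
    ∃ F : AddSubmonoid M, F ≤ H ∧ Nonempty (F ≃+ (κ → ℕ)) :=
  ⟨(span ℕ (range v)).toAddSubmonoid, (span_le (p := H.toNatSubmodule)).2 (range_subset_iff.2 hvH),
    ⟨(Basis.span hv).equivFun.toAddEquiv⟩⟩

theorem statement8_general {k : ℕ} (H : AddSubmonoid (Fin k → ℕ))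
    (X : Finset (Fin k))
    (hmax : MaxIndepOver X (H : Set (Fin k → ℕ))) :
    (∃ F : AddSubmonoid (Fin k → ℕ), F ≤ H ∧
        Nonempty (F ≃+ (Fin X.card → ℕ))) ∧
      ∀ n : ℕ, 1 ≤ n → ∀ F : AddSubmonoid (Fin k → ℕ), F ≤ H →
        Nonempty (F ≃+ (Fin n → ℕ)) → n ≤ X.card := by
  let u : H → Fin k → ℚ := fun h => toRatVec _ h
  have hrank : finrank ℚ (span ℚ (range u)) = X.card :=
    finrank_span_range_eq_card u hmax.1 hmax.coordFn_mem_span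
  constructor
  · obtain ⟨κ, a, -, hspan, hind⟩ := exists_linearIndependent' ℚ u
    have := hind.finite
    have := Fintype.ofFinite κ
    have hcard : Fintype.card κ = X.card := by rw [← finrank_span_eq_card hind, hspan, hrank]
    let e := Fintype.equivFinOfCardEq hcard
    have hind' : LinearIndependent ℕ (fun j => (a (e.symm j) : Fin k → ℕ)) :=
      linearIndependent_toRatVec_iff.1 (hind.comp e.symm e.symm.injective)
    exact H.exists_le_addEquiv_pi_of_linearIndependent hind' fun j => (a (e.symm j)).2
  · rintro n - F hFH ⟨e⟩
    let g : Fin n → Fin k → ℕ := fun j => e.symm (Pi.single j 1)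
    have hg : LinearIndependent ℕ g :=
      (Pi.linearIndependent_single_one _ ℕ).map_injOn
        (F.subtype.comp e.symm.toAddMonoidHom).toNatLinearMap
        (Subtype.val_injective.comp e.symm.injective).injOn
    calc n = finrank ℚ (span ℚ (range (toRatVec _ ∘ g))) := by
          rw [finrank_span_eq_card (linearIndependent_toRatVec_iff.2 hg), Fintype.card_fin]
      _ ≤ finrank ℚ (span ℚ (range u)) :=
          finrank_mono (span_mono (range_subset_iff.2 fun j => ⟨⟨g j, hFH (e.symm _).2⟩, rfl⟩))
      _ = X.card := hrank

theorem statement8 {k : ℕ} (hk : 0 < k) (H : AddSubmonoid (Fin k → ℕ)) (hH : H ≠ ⊥)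
    (X : Finset (Fin k)) (hX : X.Nonempty)
    (hmax : MaxIndepOver X (H : Set (Fin k → ℕ))) :
    (∃ F : AddSubmonoid (Fin k → ℕ), F ≤ H ∧
        Nonempty (F ≃+ (Fin X.card → ℕ))) ∧
      ∀ n : ℕ, 1 ≤ n → ∀ F : AddSubmonoid (Fin k → ℕ), F ≤ H →
        Nonempty (F ≃+ (Fin n → ℕ)) → n ≤ X.card :=
  statement8_general H X hmax
end

section
/- Let H be a finitely generated submonoid of ℕ^k with H ≠ {0}, and let β(H) = {h_1, h_2, …, h_r} with the h_j distinct. Then ind H equals the rank over ℚ of the k × r matrix M^H whose (i,j)-entry is h_j(i) (i.e., whose columns are h_1,…,h_r). -/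
/-!
Write `ℚH` for the `ℚ`-span of `H ⊆ ℕ^k ⊆ ℚ^k`. Elements of `ℕ^k` are `ℚ`-linearly independent iff
distinct `ℕ`-combinations of them are distinct, a property of the monoid alone; so an isomorphism
of `H` onto a submonoid of `ℕ^s` carries `dim ℚH` independent elements of `H` to independent
vectors of `ℚ^s`, and `ind H ≥ dim ℚH`. Conversely, some `dim ℚH` coordinate functionals restricted
to `ℚH` form a basis of its dual, so projecting onto these coordinates embeds `H` into `ℕ^(dim ℚH)`.
Finally `β(H)` generates `H`, so `ℚH` is the column space of `M^H`.
-/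

open Module Submodule

theorem linearIndependent_int_of_nat {ι M : Type*} [Fintype ι] [AddCommGroup M] {v : ι → M}
    (hv : LinearIndependent ℕ v) : LinearIndependent ℤ v := by
  rw [Fintype.linearIndependent_iff]
  intro z hz i
  have hsplit (j : ι) : z j = (z j).toNat - (-z j).toNat := (Int.toNat_sub_toNat_neg (z j)).symm
  have hpos_neg : ∑ j, (z j).toNat • v j = ∑ j, (-z j).toNat • v j := by
    rw [← sub_eq_zero, ← Finset.sum_sub_distrib, ← hz]
    refine Finset.sum_congr rfl fun j _ => ?_
    conv_rhs => rw [hsplit j]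
    rw [sub_smul, natCast_zsmul, natCast_zsmul]
  rw [hsplit i, Fintype.linearIndependent_iffₛ.mp hv _ _ hpos_neg i, sub_self]

theorem linearIndependent_nat_iff_rat {ι V : Type*} [Fintype ι] [AddCommGroup V] [Module ℚ V]
    {v : ι → V} : LinearIndependent ℕ v ↔ LinearIndependent ℚ v :=
  ⟨fun hv => (LinearIndependent.iff_fractionRing ℤ ℚ).mp (linearIndependent_int_of_nat hv),
    LinearIndependent.restrict_scalars' ℕ⟩

theorem Submodule.exists_determining_finset_card_eq_finrank {K ι : Type*} [Field K]
    [Fintype ι] (V : Submodule K (ι → K)) :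
    ∃ X : Finset ι, X.card = finrank K V ∧ ∀ v ∈ V, (∀ i ∈ X, v i = 0) → v = 0 := by
  let coord (i : ι) : Dual K V := (LinearMap.proj i).comp V.subtype
  have hspan : span K (Set.range coord) = ⊤ := by
    refine eq_top_iff.mpr fun φ _ => FiniteDimensional.mem_span_of_iInf_ker_le_ker fun v hv => ?_
    have hv0 : v = 0 := Subtype.ext <| funext fun i => (mem_iInf _).mp hv i
    simp [hv0]
  obtain ⟨κ, a, ha, hspan', hli⟩ := exists_linearIndependent' K coord
  have : Fintype κ := Fintype.ofInjective a ha
  refine ⟨Finset.univ.map ⟨a, ha⟩, ?_, fun v hv hX => funext fun i => ?_⟩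
  · rw [Finset.card_map, Finset.card_univ, ← finrank_span_eq_card hli, hspan', hspan, finrank_top,
      Subspace.dual_finrank_eq]
  · have hker : span K (Set.range (coord ∘ a)) ≤ LinearMap.ker (Dual.eval K V ⟨v, hv⟩) :=
      span_le.mpr <| Set.range_subset_iff.mpr fun j => hX _ (by simp)
    exact hker (by rw [hspan', hspan]; exact mem_top : coord i ∈ _)

def castRat (σ : Type*) : (σ → ℕ) →+ (σ → ℚ) := (Nat.castAddMonoidHom ℚ).compLeft σ

theorem castRat_injective (σ : Type*) : Function.Injective (castRat σ) :=
  fun _ _ hxy => funext fun i => by simpa [castRat] using congrFun hxy i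

def ratSpan {σ : Type*} (H : AddSubmonoid (σ → ℕ)) : Submodule ℚ (σ → ℚ) :=
  span ℚ (castRat σ '' H)

open Pointwise in
theorem closure_beta {k : ℕ} (H : AddSubmonoid (Fin k → ℕ)) :
    AddSubmonoid.closure (beta H) = H := by
  refine le_antisymm (AddSubmonoid.closure_le.mpr fun x hx => hx.1.1) fun y hy => ?_
  induction y using WellFoundedLT.induction with
  | _ y ih =>
    by_cases hy0 : y = 0
    · exact hy0 ▸ zero_mem _
    by_cases hyβ : y ∈ beta H
    · exact AddSubmonoid.subset_closure hyβ
    obtain ⟨a, ha, b, hb, rfl⟩ :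
        y ∈ ((H : Set (Fin k → ℕ)) \ {0}) + ((H : Set (Fin k → ℕ)) \ {0}) :=
      not_not.mp fun hsum => hyβ ⟨⟨hy, hy0⟩, hsum⟩
    refine add_mem (ih a (lt_of_le_of_ne le_self_add ?_) ha.1)
      (ih b (lt_of_le_of_ne le_add_self ?_) hb.1)
    · simpa using hb.2
    · simpa using ha.2

theorem ratSpan_eq_span_beta {k : ℕ} (H : AddSubmonoid (Fin k → ℕ)) :
    ratSpan H = span ℚ (castRat (Fin k) '' beta H) := by
  conv_lhs => rw [ratSpan, ← closure_beta H]
  rw [← AddSubmonoid.coe_map, AddMonoidHom.map_mclosure, span_closure]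

theorem IsoToSub.finrank_ratSpan_le {k s : ℕ} {H : AddSubmonoid (Fin k → ℕ)}
    (hs : IsoToSub H s) : finrank ℚ (ratSpan H) ≤ s := by
  obtain ⟨K, ⟨φ⟩⟩ := hs
  let f : H →+ (Fin k → ℚ) := (castRat (Fin k)).comp H.subtype
  let g : H →+ (Fin s → ℚ) := (castRat (Fin s)).comp (K.subtype.comp φ.toAddMonoidHom)
  have hg : Function.Injective g :=
    (castRat_injective _).comp (Subtype.val_injective.comp φ.injective)
  obtain ⟨κ, a, -, hspan, hli⟩ := exists_linearIndependent' ℚ f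
  have : Fintype κ := have := hli.finite; Fintype.ofFinite κ
  have hκ : finrank ℚ (ratSpan H) = Fintype.card κ := by
    have hrange : Set.range f = castRat (Fin k) '' H := by ext; simp [f]
    rw [← finrank_span_eq_card hli, hspan, hrange, ratSpan]
  have hnat : LinearIndependent ℕ a :=
    (linearIndependent_nat_iff_rat.mpr hli).of_comp f.toNatLinearMap
  have hli' : LinearIndependent ℚ (g ∘ a) := linearIndependent_nat_iff_rat.mp
    (hnat.map_of_injective_injectiveₛ id g Function.injective_id hg fun r m => map_nsmul g r m)
  simpa [hκ] using hli'.fintype_card_le_finrank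

theorem isoToSub_of_injective {k s : ℕ} {H : AddSubmonoid (Fin k → ℕ)} (g : H →+ (Fin s → ℕ))
    (hg : Function.Injective g) : IsoToSub H s :=
  ⟨AddMonoidHom.mrange g, ⟨AddEquiv.ofBijective g.mrangeRestrict
    ⟨fun _ _ hxy => hg (congrArg Subtype.val hxy), g.mrangeRestrict_surjective⟩⟩⟩

theorem isoToSub_finrank_ratSpan {k : ℕ} (H : AddSubmonoid (Fin k → ℕ)) :
    IsoToSub H (finrank ℚ (ratSpan H)) := by
  obtain ⟨X, hcard, hX⟩ := (ratSpan H).exists_determining_finset_card_eq_finrank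
  rw [← hcard]
  refine isoToSub_of_injective ((restrictHom X).comp H.subtype) fun x y hxy =>
    Subtype.ext <| castRat_injective _ <| sub_eq_zero.mp <|
      hX _ (sub_mem (subset_span ⟨x, x.2, rfl⟩) (subset_span ⟨y, y.2, rfl⟩)) fun i hi => ?_
  have hi := congrFun hxy ((X.orderIsoOfFin rfl).symm ⟨i, hi⟩)
  simp only [AddMonoidHom.comp_apply, AddSubmonoid.coe_subtype, restrictHom, AddMonoidHom.coe_mk,
    ZeroHom.coe_mk, OrderIso.apply_symm_apply] at hi
  simp [castRat, hi]

theorem indOf_eq_finrank_ratSpan {k : ℕ} {H : AddSubmonoid (Fin k → ℕ)} (hH : H ≠ ⊥) :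
    indOf H = finrank ℚ (ratSpan H) := by
  have hpos : 0 < finrank ℚ (ratSpan H) := by
    obtain ⟨x, hxH, hx⟩ := H.bot_or_exists_ne_zero.resolve_left hH
    exact finrank_pos_iff_exists_ne_zero.mpr ⟨⟨castRat _ x, subset_span ⟨x, hxH, rfl⟩⟩,
      mt (congrArg Subtype.val) (by simpa using (castRat_injective _).ne hx)⟩
  exact le_antisymm (Nat.sInf_le ⟨hpos, isoToSub_finrank_ratSpan H⟩)
    (le_csInf ⟨_, hpos, isoToSub_finrank_ratSpan H⟩ fun s hs => hs.2.finrank_ratSpan_le)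

theorem statement9_general {k r : ℕ} (H : AddSubmonoid (Fin k → ℕ)) (hH : H ≠ ⊥)
    (h : Fin r → (Fin k → ℕ)) (hbeta : beta H = Set.range h) :
    indOf H = (Matrix.of fun i j => ((h j i : ℕ) : ℚ) : Matrix (Fin k) (Fin r) ℚ).rank := by
  rw [indOf_eq_finrank_ratSpan hH, Matrix.rank_eq_finrank_span_cols, ratSpan_eq_span_beta, hbeta,
    ← Set.range_comp]
  rfl

theorem statement9 {k r : ℕ} (hk : 0 < k) (H : AddSubmonoid (Fin k → ℕ)) (hH : H ≠ ⊥)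
    (hFG : H.FG) (h : Fin r → (Fin k → ℕ)) (hinj : Function.Injective h)
    (hbeta : beta H = Set.range h) :
    indOf H = (Matrix.of fun i j => ((h j i : ℕ) : ℚ) : Matrix (Fin k) (Fin r) ℚ).rank :=
  statement9_general H hH h hbeta
end
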